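/- arXiv:1706.05715 — 2 statements merged into one kernel-verified Lean document; each statement's English description precedes it below -/
import Mathlib

section
/- Running a trace of call/return events on a shadow stack starting from stack s succeeds with final stack s' if and only if running the same trace from stack s ++ t succeeds with final stack s' ++ t, provided the trace never returns past the original stack s (i.e., the number of returns in every prefix does not exceed the number of calls in that prefix). In particular, shadow-stack checking is compositional over nested subroutine invocations. -/
inductive Event (A : Type) where
  | call : A → Event A
  | ret  : A → Event A

def run {A : Type} [DecidableEq A] : List (Event A) → List A → Option (List A)
  | [], s => some s
  | Event.call a :: es, s => run es (a :: s)
  | Event.ret _ :: _, [] => none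
  | Event.ret a :: es, b :: s => if a = b then run es s else none

def numCalls {A : Type} (es : List (Event A)) : ℕ :=
  es.countP (fun e => match e with | Event.call _ => true | Event.ret _ => false)

def numRets {A : Type} (es : List (Event A)) : ℕ :=
  es.countP (fun e => match e with | Event.call _ => false | Event.ret _ => true)

/-- A trace is subroutine-confined if every prefix has at least as many calls as
returns (it never returns past the original stack). -/
def Confined {A : Type} (es : List (Event A)) : Prop :=
  ∀ p, p <+: es → numRets p ≤ numCalls p

lemma run_append_key {A : Type} [DecidableEq A] :
    ∀ (es : List (Event A)) (s t : List A),
    (∀ p, p <+: es → numRets p ≤ numCalls p + s.length) →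
    run es (s ++ t) = (run es s).map (· ++ t) := by
  intro es
  induction es with
  | nil => intro s t _; simp [run]
  | cons e es ih =>
    intro s t h
    cases e with
    | call a =>
      have : run es ((a :: s) ++ t) = (run es (a :: s)).map (· ++ t) := by
        apply ih
        intro p hp
        have := h (Event.call a :: p) (List.cons_prefix_cons.mpr ⟨rfl, hp⟩)
        simp [numRets, numCalls, List.countP_cons] at this ⊢
        omega
      simpa [run] using this
    | ret a =>
      cases s with
      | nil =>
        have := h [Event.ret a] ⟨es, rfl⟩
        simp [numRets, numCalls, List.countP_cons] at this
      | cons b s =>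
        by_cases hab : a = b
        · have : run es (s ++ t) = (run es s).map (· ++ t) := by
            apply ih
            intro p hp
            have := h (Event.ret a :: p) (List.cons_prefix_cons.mpr ⟨rfl, hp⟩)
            simp [numRets, numCalls, List.countP_cons] at this ⊢
            omega
          simpa [run, hab] using this
        · simp [run, hab]

/-- Shadow-stack checking is compositional over nested subroutine invocations:
running a subroutine-confined trace from stack `s` succeeds with final stack `s'`
iff running it from `s ++ t` succeeds with final stack `s' ++ t`. -/
theorem stmt1 {A : Type} [DecidableEq A] (es : List (Event A))
    (hconf : Confined es) (s s' t : List A) :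
    run es s = some s' ↔ run es (s ++ t) = some (s' ++ t) := by
  have key := run_append_key es s t (fun p hp => le_trans (hconf p hp) (Nat.le_add_right _ _))
  rw [key]
  constructor
  · intro h; simp [h]
  · intro h
    rcases Option.map_eq_some_iff.mp h with ⟨r, hr, heq⟩
    have : r = s' := List.append_cancel_right heq
    rwa [this] at hr
end

section
/- A balanced, subroutine-confined trace h satisfies: for every stack s, run h s = some s. That is, balanced well-nested traces that pass checking leave any initial shadow stack unchanged. -/
lemma run_append {A : Type} [DecidableEq A] :
    ∀ (h : List (Event A)) (s s' t : List A), run h s = some s' →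
      run h (s ++ t) = some (s' ++ t) := by
  intro h
  induction h with
  | nil => intro s s' t hr; simp [run] at hr ⊢; exact hr
  | cons e es ih =>
    intro s s' t hr
    cases e with
    | call a => exact ih (a :: s) s' t hr
    | ret a =>
      cases s with
      | nil => simp [run] at hr
      | cons b s =>
        simp only [run, List.cons_append] at hr ⊢
        by_cases hab : a = b
        · simp [hab] at hr ⊢; exact ih s s' t hr
        · simp [hab] at hr

/-- A balanced, subroutine-confined trace that passes shadow-stack checking from the
empty stack leaves any initial shadow stack unchanged. -/
theorem stmt8 {A : Type} [DecidableEq A] (h : List (Event A))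
    (hbal : numCalls h = numRets h)
    (hconf : ∀ p, p <+: h → numRets p ≤ numCalls p)
    (hpass : run h [] = some ([] : List A)) :
    ∀ s : List A, run h s = some s := by
  intro s
  simpa using run_append h [] [] s hpass
end
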